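/- arXiv:1411.1217 — 4 statements merged into one kernel-verified Lean document; each statement's English description precedes it below -/
import Mathlib

section
/- For any complex n×n matrix A, any ε > 0 and any k ∈ ℕ, the operator 2-norm satisfies ‖A^k‖ ≤ √n (1 + 2/ε)^{n−1} (ρ(A) + ε‖A‖)^k, where ρ(A) is the spectral radius of A. -/
/-- The operator 2-norm of a complex square matrix. -/
noncomputable def opNorm {n : ℕ} (A : Matrix (Fin n) (Fin n) ℂ) : ℝ :=
  ‖Matrix.toEuclideanCLM (𝕜 := ℂ) A‖

/-- The spectral radius of a complex square matrix: the maximum modulus of its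
eigenvalues. -/
noncomputable def specRad {n : ℕ} (A : Matrix (Fin n) (Fin n) ℂ) : ℝ :=
  sSup ((fun z : ℂ => ‖z‖) '' spectrum ℂ A)

/-! By Schur's theorem `A = U T U*` with `U` unitary and `T` upper triangular; the diagonal of `T`
consists of eigenvalues of `A` and every entry of `T` is bounded by `‖A‖`. Conjugating by
`D = diag(δ^i)` multiplies the entry `T i j` by `δ^(j-i)`, so `B = D⁻¹ T D` has absolute row sums at
most `ρ(A) + ‖A‖ δ/(1-δ)`. Absolute row sums are submultiplicative and bound the operator 2-norm up
to a factor `√n`, while undoing the scaling costs `‖D‖ ‖D⁻¹‖ ≤ δ^-(n-1)`. Finally `δ = ε/(1+ε)`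
gives `δ/(1-δ) = ε` and `δ⁻¹ = 1 + 1/ε`. -/

open scoped InnerProductSpace Matrix.Norms.L2Operator
open Finset

theorem sum_pow_succ_le_of_injOn {ι : Type*} {s : Finset ι} {e : ι → ℕ} (he : Set.InjOn e s)
    {x : ℝ} (hx0 : 0 ≤ x) (hx1 : x < 1) : ∑ i ∈ s, x ^ (e i + 1) ≤ x / (1 - x) := by
  classical
  calc ∑ i ∈ s, x ^ (e i + 1) = x * ∑ d ∈ s.image e, x ^ d := by
        simp [sum_image he, mul_sum, pow_succ']
    _ ≤ x * ∑' d, x ^ d := by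
        gcongr
        exact (summable_geometric_of_lt_one hx0 hx1).sum_le_tsum _ fun _ _ => by positivity
    _ = x / (1 - x) := by rw [tsum_geometric_of_lt_one hx0 hx1, div_eq_mul_inv]

theorem Fin.sum_filter_lt_pow_sub_le {n : ℕ} (i : Fin n) {x : ℝ} (hx0 : 0 ≤ x) (hx1 : x < 1) :
    ∑ j ∈ univ.filter (i < ·), x ^ ((j : ℕ) - i) ≤ x / (1 - x) := by
  calc ∑ j ∈ univ.filter (i < ·), x ^ ((j : ℕ) - i)
      = ∑ j ∈ univ.filter (i < ·), x ^ ((j : ℕ) - i - 1 + 1) := by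
        refine sum_congr rfl fun j hj => ?_
        have : (i : ℕ) < j := by simpa using hj
        congr 1; omega
    _ ≤ x / (1 - x) := by
        refine sum_pow_succ_le_of_injOn (fun j hj j' hj' h => ?_) hx0 hx1
        have : (i : ℕ) < j := by simpa using hj
        have : (i : ℕ) < j' := by simpa using hj'
        exact Fin.ext (by omega)

theorem LinearMap.exists_orthonormalBasis_inner_apply_eq_zero_of_lt {E : Type*}
    [NormedAddCommGroup E] [InnerProductSpace ℂ E] [FiniteDimensional ℂ E] {n : ℕ}
    (hn : Module.finrank ℂ E = n) (f : E →ₗ[ℂ] E) :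
    ∃ b : OrthonormalBasis (Fin n) ℂ E, ∀ i j, j < i → ⟪b i, f (b j)⟫_ℂ = 0 := by
  induction n generalizing E with
  | zero => exact ⟨(stdOrthonormalBasis ℂ E).reindex (finCongr hn), fun i => i.elim0⟩
  | succ n ih =>
    have : Nontrivial E := Module.nontrivial_of_finrank_eq_succ hn
    have : Fact (Module.finrank ℂ E = n + 1) := ⟨hn⟩
    obtain ⟨μ, hμ⟩ := Module.End.exists_eigenvalue (LinearMap.adjoint f)
    obtain ⟨v, hv⟩ := hμ.exists_hasEigenvector
    set u : E := (‖v‖⁻¹ : ℂ) • v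
    have hu : ‖u‖ = 1 := norm_smul_inv_norm hv.2
    have hfu : LinearMap.adjoint f u = μ • u := by
      simp only [u, map_smul, hv.apply_eq_smul, smul_comm μ]
    set K := (ℂ ∙ u)ᗮ
    -- the orthogonal complement of an eigenvector of `f†` is `f`-invariant
    have hK : ∀ x ∈ K, f x ∈ K := fun x hx => by
      rw [Submodule.mem_orthogonal_singleton_iff_inner_right] at hx ⊢
      rw [← LinearMap.adjoint_inner_left, hfu, inner_smul_left, hx, mul_zero]
    obtain ⟨c, hc⟩ := ih (f := f.restrict hK)
      (Submodule.finrank_orthogonal_span_singleton (ne_zero_of_norm_ne_zero (by simp [hu])))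
    have huc : ∀ i, ⟪u, c i⟫_ℂ = 0 := fun i =>
      Submodule.mem_orthogonal_singleton_iff_inner_right.1 (c i).2
    set w : Fin (n + 1) → E := Fin.snoc (fun i => (c i : E)) u
    have hw : Orthonormal ℂ w := by
      rw [orthonormal_iff_ite]
      have hc' := orthonormal_iff_ite.1 c.orthonormal
      intro i j
      induction i using Fin.lastCases <;> induction j using Fin.lastCases <;>
        simp [w, huc, inner_eq_zero_symm.1 (huc _), ← Submodule.coe_inner, hc', hu,
          (Fin.castSucc_ne_last _).symm]
    refine ⟨(basisOfOrthonormalOfCardEqFinrank hw (by simp [hn])).toOrthonormalBasis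
      (by simpa using hw), ?_⟩
    simp only [Module.Basis.coe_toOrthonormalBasis, coe_basisOfOrthonormalOfCardEqFinrank]
    intro i j hji
    induction j using Fin.lastCases with
    | last => exact absurd hji (Fin.le_last i).not_gt
    | cast j =>
      induction i using Fin.lastCases with
      | last =>
        simpa [w] using Submodule.mem_orthogonal_singleton_iff_inner_right.1 (hK _ (c j).2)
      | cast i => simpa [w, Submodule.coe_inner] using hc i j (by simpa using hji)

namespace Matrix

theorem exists_mem_unitaryGroup_isUpperTriangular {n : ℕ} (A : Matrix (Fin n) (Fin n) ℂ) :
    ∃ U ∈ unitaryGroup (Fin n) ℂ, (star U * A * U).IsUpperTriangular := by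
  let b₀ := EuclideanSpace.basisFun (Fin n) ℂ
  obtain ⟨b, hb⟩ := (toEuclideanLin A).exists_orthonormalBasis_inner_apply_eq_zero_of_lt
    finrank_euclideanSpace_fin
  have hU : b₀.toBasis.toMatrix b.toBasis ∈ unitaryGroup (Fin n) ℂ := by
    simpa using b₀.toMatrix_orthonormalBasis_mem_unitary b
  have hstar : star (b₀.toBasis.toMatrix b.toBasis) = b.toBasis.toMatrix b₀.toBasis := by
    rw [← mul_one (star _), ← b₀.toBasis.toMatrix_mul_toMatrix_flip b.toBasis, ← mul_assoc,
      mem_unitaryGroup_iff'.1 hU, one_mul]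
  refine ⟨_, hU, fun i j hji => ?_⟩
  rw [hstar, ← LinearMap.toMatrix_toLin b₀.toBasis b₀.toBasis A,
    basis_toMatrix_mul_linearMap_toMatrix_mul_basis_toMatrix, LinearMap.toMatrix_apply,
    OrthonormalBasis.coe_toBasis_repr_apply, OrthonormalBasis.repr_apply_apply]
  exact hb i j hji

theorem IsUpperTriangular.diag_mem_spectrum {K m : Type*} [Field K] [Fintype m] [DecidableEq m]
    [LinearOrder m] {T : Matrix m m K} (hT : T.IsUpperTriangular) (i : m) :
    T i i ∈ spectrum K T := by
  rw [mem_spectrum_iff_isRoot_charpoly, charpoly_of_isUpperTriangular T hT, Polynomial.IsRoot,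
    Polynomial.eval_prod]
  exact prod_eq_zero (mem_univ i) (by simp)

section L2

variable {𝕜 : Type*} [RCLike 𝕜] {m n : Type*} [Fintype m] [Fintype n] [DecidableEq n]

theorem norm_apply_le_l2_opNorm (M : Matrix m n 𝕜) (i : m) (j : n) : ‖M i j‖ ≤ ‖M‖ := by
  calc ‖M i j‖ = ‖(EuclideanSpace.equiv m 𝕜).symm (M *ᵥ EuclideanSpace.single j 1) i‖ := by
        simp
    _ ≤ ‖(EuclideanSpace.equiv m 𝕜).symm (M *ᵥ EuclideanSpace.single j 1)‖ :=
        PiLp.norm_apply_le _ i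
    _ ≤ ‖M‖ * ‖EuclideanSpace.single j (1 : 𝕜)‖ := M.l2_opNorm_mulVec _
    _ = ‖M‖ := by simp

theorem l2_opNorm_le_sqrt_card_mul {r : ℝ} (M : Matrix m n 𝕜) (hM : ∀ i, ∑ j, ‖M i j‖ ≤ r) :
    ‖M‖ ≤ √(Fintype.card m) * r := by
  rcases isEmpty_or_nonempty m with hm | hm
  · simp [Subsingleton.elim M 0]
  obtain ⟨i₀⟩ := hm
  have hr : 0 ≤ r := (Finset.sum_nonneg fun j _ => norm_nonneg _).trans (hM i₀)
  refine ContinuousLinearMap.opNorm_le_bound _ (by positivity) fun x => ?_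
  have hcoord : ∀ i, ‖(M *ᵥ x) i‖ ≤ r * ‖x‖ := fun i => calc
    ‖(M *ᵥ x) i‖ ≤ ∑ j, ‖M i j‖ * ‖x j‖ := (norm_sum_le _ _).trans_eq (by simp [norm_mul])
    _ ≤ ∑ j, ‖M i j‖ * ‖x‖ := by gcongr with j; exact PiLp.norm_apply_le x j
    _ ≤ r * ‖x‖ := by rw [← Finset.sum_mul]; gcongr; exact hM i
  calc ‖(EuclideanSpace.equiv m 𝕜).symm (M *ᵥ x)‖ = √(∑ i, ‖(M *ᵥ x) i‖ ^ 2) :=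
        EuclideanSpace.norm_eq _
    _ ≤ √(∑ _ : m, (r * ‖x‖) ^ 2) := by gcongr with i; exact hcoord i
    _ = √(Fintype.card m) * r * ‖x‖ := by
        rw [Finset.sum_const, Finset.card_univ, nsmul_eq_mul, Real.sqrt_mul (by positivity),
          Real.sqrt_sq (by positivity), mul_assoc]

end L2

theorem sum_norm_pow_apply_le {R : Type*} [NormedRing R] [NormOneClass R] {m : Type*} [Fintype m]
    [DecidableEq m] {B : Matrix m m R} {r : ℝ} (hB : ∀ i, ∑ j, ‖B i j‖ ≤ r) (k : ℕ) (i : m) :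
    ∑ j, ‖(B ^ k) i j‖ ≤ r ^ k := by
  induction k generalizing i with
  | zero => simp [one_apply, apply_ite]
  | succ k ih =>
    have hr : 0 ≤ r := (sum_nonneg fun j _ => norm_nonneg _).trans (hB i)
    calc ∑ j, ‖(B ^ (k + 1)) i j‖ = ∑ j, ‖∑ l, (B ^ k) i l * B l j‖ := by simp [pow_succ, mul_apply]
      _ ≤ ∑ j, ∑ l, ‖(B ^ k) i l‖ * ‖B l j‖ := by
        gcongr with j; exact (norm_sum_le _ _).trans (sum_le_sum fun l _ => norm_mul_le _ _)
      _ = ∑ l, ‖(B ^ k) i l‖ * ∑ j, ‖B l j‖ := by rw [sum_comm]; simp [mul_sum]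
      _ ≤ ∑ l, ‖(B ^ k) i l‖ * r := by gcongr with l; exact hB l
      _ ≤ r ^ k * r := by rw [← sum_mul]; gcongr; exact ih i
      _ = r ^ (k + 1) := (pow_succ r k).symm

variable {𝕜 : Type*} [RCLike 𝕜] {n : ℕ} {T : Matrix (Fin n) (Fin n) 𝕜} {ρ a δ : ℝ}

theorem IsUpperTriangular.sum_norm_diagonal_mul_mul_diagonal_apply_le (hT : T.IsUpperTriangular)
    (hδ0 : 0 < δ) (hδ1 : δ < 1) (hdiag : ∀ i, ‖T i i‖ ≤ ρ) (hoff : ∀ i j, ‖T i j‖ ≤ a)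
    (i : Fin n) :
    ∑ j, ‖(diagonal (fun l : Fin n => (δ : 𝕜)⁻¹ ^ (l : ℕ)) * T *
      diagonal fun l : Fin n => (δ : 𝕜) ^ (l : ℕ)) i j‖ ≤ ρ + a * (δ / (1 - δ)) := by
  have hentry : ∀ j, ‖(diagonal (fun l : Fin n => (δ : 𝕜)⁻¹ ^ (l : ℕ)) * T *
      diagonal fun l : Fin n => (δ : 𝕜) ^ (l : ℕ)) i j‖ ≤
      (if j = i then ρ else 0) + if i < j then a * δ ^ ((j : ℕ) - i) else 0 := by
    intro j
    simp only [mul_diagonal, diagonal_mul, norm_mul, norm_pow, norm_inv, RCLike.norm_ofReal,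
      abs_of_pos hδ0]
    rcases lt_trichotomy j i with hji | rfl | hij
    · simp [hT hji, hji.ne, hji.not_gt]
    · rw [if_pos rfl, if_neg (lt_irrefl j), add_zero, mul_comm, ← mul_assoc, ← mul_pow,
        mul_inv_cancel₀ hδ0.ne', one_pow, one_mul]
      exact hdiag j
    · rw [if_neg hij.ne', if_pos hij, zero_add, mul_comm _ ‖T i j‖, mul_assoc, inv_pow,
        ← div_eq_inv_mul, pow_sub₀ _ hδ0.ne' hij.le, div_eq_mul_inv]
      exact mul_le_mul_of_nonneg_right (hoff i j) (by positivity)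
  have ha : 0 ≤ a := (norm_nonneg _).trans (hoff i i)
  calc _ ≤ ∑ j, ((if j = i then ρ else 0) + if i < j then a * δ ^ ((j : ℕ) - i) else 0) :=
        sum_le_sum fun j _ => hentry j
    _ = ρ + a * ∑ j ∈ univ.filter (i < ·), δ ^ ((j : ℕ) - i) := by
        rw [sum_add_distrib, sum_ite_eq', if_pos (mem_univ _), ← sum_filter, mul_sum]
    _ ≤ ρ + a * (δ / (1 - δ)) := by gcongr; exact Fin.sum_filter_lt_pow_sub_le i hδ0.le hδ1

theorem IsUpperTriangular.l2_opNorm_pow_le (hT : T.IsUpperTriangular) (hδ0 : 0 < δ) (hδ1 : δ < 1)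
    (hdiag : ∀ i, ‖T i i‖ ≤ ρ) (hoff : ∀ i j, ‖T i j‖ ≤ a) (k : ℕ) :
    ‖T ^ k‖ ≤ √n * (δ ^ (n - 1))⁻¹ * (ρ + a * (δ / (1 - δ))) ^ k := by
  set D := diagonal fun l : Fin n => (δ : 𝕜) ^ (l : ℕ)
  set D' := diagonal fun l : Fin n => (δ : 𝕜)⁻¹ ^ (l : ℕ)
  have hDD' : D * D' = 1 := by
    simp only [D, D', diagonal_mul_diagonal, ← mul_pow]
    simp [hδ0.ne']
  have hconj : SemiconjBy D' T (D' * T * D) := by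
    rw [SemiconjBy, mul_assoc _ D, hDD', mul_one]
  have hTk : T ^ k = D * (D' * T * D) ^ k * D' := by
    rw [mul_assoc, ← (hconj.pow_right k).eq, ← mul_assoc, hDD', one_mul]
  have hD : ‖D‖ ≤ 1 := by
    refine (l2_opNorm_diagonal _).trans_le ((pi_norm_le_iff_of_nonneg zero_le_one).2 fun l => ?_)
    simpa [abs_of_pos hδ0] using pow_le_one₀ hδ0.le hδ1.le
  have hD' : ‖D'‖ ≤ (δ ^ (n - 1))⁻¹ := by
    refine (l2_opNorm_diagonal _).trans_le
      ((pi_norm_le_iff_of_nonneg (by positivity)).2 fun l => ?_)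
    simpa [abs_of_pos hδ0] using
      pow_le_pow_right₀ (one_le_inv₀ hδ0 |>.2 hδ1.le) (Nat.le_pred_of_lt l.2)
  have hBk := l2_opNorm_le_sqrt_card_mul _
    (sum_norm_pow_apply_le (hT.sum_norm_diagonal_mul_mul_diagonal_apply_le hδ0 hδ1 hdiag hoff) k)
  rw [Fintype.card_fin] at hBk
  calc ‖T ^ k‖ ≤ ‖D‖ * ‖(D' * T * D) ^ k‖ * ‖D'‖ := hTk ▸ norm_mul₃_le
    _ ≤ 1 * (√n * (ρ + a * (δ / (1 - δ))) ^ k) * (δ ^ (n - 1))⁻¹ :=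
      mul_le_mul (mul_le_mul hD hBk (norm_nonneg _) zero_le_one) hD' (norm_nonneg _)
        (by simpa using (norm_nonneg _).trans hBk)
    _ = _ := by ring

end Matrix

theorem norm_le_specRad {n : ℕ} {A : Matrix (Fin n) (Fin n) ℂ} {z : ℂ} (hz : z ∈ spectrum ℂ A) :
    ‖z‖ ≤ specRad A :=
  le_csSup ((A.finite_spectrum.image _).bddAbove) ⟨z, hz, rfl⟩

theorem specRad_nonneg {n : ℕ} (A : Matrix (Fin n) (Fin n) ℂ) : 0 ≤ specRad A :=
  Real.sSup_nonneg (by rintro _ ⟨z, -, rfl⟩; exact norm_nonneg z)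

/-- For any complex `n × n` matrix `A`, any `ε > 0` and any `k`,
`‖A^k‖ ≤ √n (1 + 2/ε)^(n-1) (ρ(A) + ε ‖A‖)^k`. -/
theorem opNorm_pow_le {n : ℕ} (A : Matrix (Fin n) (Fin n) ℂ) (ε : ℝ) (hε : 0 < ε) (k : ℕ) :
    opNorm (A ^ k) ≤
      Real.sqrt n * (1 + 2 / ε) ^ (n - 1) * (specRad A + ε * opNorm A) ^ k := by
  obtain ⟨U, hU, hT⟩ := A.exists_mem_unitaryGroup_isUpperTriangular
  let φ := Unitary.conjStarAlgAut ℂ _ (star (⟨U, hU⟩ : unitary (Matrix (Fin n) (Fin n) ℂ)))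
  have hφ : ∀ X, φ X = star U * X * U := fun X => by simp [φ]
  have hφnorm : ∀ X, ‖φ X‖ = ‖X‖ := fun X => by
    rw [hφ, CStarRing.norm_mul_mem_unitary _ hU,
      CStarRing.norm_mem_unitary_mul _ (Unitary.star_mem hU)]
  rw [← hφ] at hT
  set δ := ε / (1 + ε)
  have hδ0 : 0 < δ := by positivity
  have hδ1 : δ < 1 := (div_lt_one (by positivity)).2 (by linarith)
  have hδε : δ / (1 - δ) = ε := by simp only [δ]; field_simp; ring
  have hδinv : (δ ^ (n - 1))⁻¹ ≤ (1 + 2 / ε) ^ (n - 1) := by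
    rw [← inv_pow]
    gcongr
    rw [inv_div, add_div, div_self hε.ne', add_comm]
    gcongr; norm_num
  have hdiag : ∀ i, ‖φ A i i‖ ≤ specRad A := fun i =>
    norm_le_specRad (AlgEquiv.spectrum_eq φ A ▸ Matrix.IsUpperTriangular.diag_mem_spectrum hT i)
  have hoff : ∀ i j, ‖φ A i j‖ ≤ ‖A‖ := fun i j =>
    (Matrix.norm_apply_le_l2_opNorm _ i j).trans (hφnorm A).le
  have key := Matrix.IsUpperTriangular.l2_opNorm_pow_le hT hδ0 hδ1 hdiag hoff k
  rw [← map_pow, hφnorm, hδε, mul_comm ‖A‖] at key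
  change ‖A ^ k‖ ≤ _ * (_ + ε * ‖A‖) ^ k
  calc ‖A ^ k‖ ≤ √n * (δ ^ (n - 1))⁻¹ * (specRad A + ε * ‖A‖) ^ k := key
    _ ≤ √n * (1 + 2 / ε) ^ (n - 1) * (specRad A + ε * ‖A‖) ^ k := by
      have := specRad_nonneg A
      gcongr
end

section
/- Let h(X) = A X Aᵀ + Q and g(X) = A X Aᵀ + Q − A X Cᵀ (C X Cᵀ + R)^{-1} C X Aᵀ with R positive definite and Q positive semidefinite. For any positive semidefinite matrices X ≥ Y ≥ 0 (in the Loewner order), one has h(X) ≥ h(Y), g(X) ≥ g(Y), and h(X) ≥ g(X). -/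
/-!
Write `S_X = C X Cᵀ + R` and `K_X = A X Cᵀ S_X⁻¹` (the Kalman gain). Completing the square in
the gain gives, for every `K`,
`(A - K C) X (A - K C)ᵀ + K R Kᵀ + Q = g(X) + (K - K_X) S_X (K - K_X)ᵀ`.
Taking `K = K_X` writes `g(X)` as `F X Fᵀ + K_X R K_Xᵀ + Q` with `F = A - K_X C`; subtracting the
identity at `Y` with the same `K = K_X` gives
`g(X) - g(Y) = F (X - Y) Fᵀ + (K_X - K_Y) S_Y (K_X - K_Y)ᵀ ≥ 0`.
The other two claims are congruences: `h(X) - h(Y) = A (X - Y) Aᵀ` and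
`h(X) - g(X) = (A X Cᵀ) S_X⁻¹ (A X Cᵀ)ᵀ`.
-/

open Matrix

namespace Matrix

theorem PosSemidef.mul_mul_transpose_same {ι κ : Type*} [Fintype ι] [Finite κ]
    {M : Matrix ι ι ℝ} (hM : M.PosSemidef) (B : Matrix κ ι ℝ) : (B * M * Bᵀ).PosSemidef := by
  simpa using hM.mul_mul_conjTranspose_same B

theorem PosSemidef.transpose_eq_self {ι : Type*} {M : Matrix ι ι ℝ} (hM : M.PosSemidef) :
    Mᵀ = M := by
  simpa [conjTranspose_eq_transpose_of_trivial] using hM.isHermitian.eq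

theorem PosSemidef.mul_mul_transpose_add_posDef {ι κ : Type*} [Fintype ι] [Finite κ]
    {X : Matrix ι ι ℝ} {R : Matrix κ κ ℝ} (hX : X.PosSemidef) (C : Matrix κ ι ℝ)
    (hR : R.PosDef) : (C * X * Cᵀ + R).PosDef :=
  PosDef.posSemidef_add (hX.mul_mul_transpose_same C) hR

variable {ι κ 𝕜 : Type*} [Fintype κ] [CommRing 𝕜]

section CommRing

variable [DecidableEq κ]

theorem sub_mul_inv_mul_mul_transpose {S : Matrix κ κ 𝕜} (K P : Matrix ι κ 𝕜) (hS : Sᵀ = S)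
    (hdet : IsUnit S.det) :
    (K - P * S⁻¹) * S * (K - P * S⁻¹)ᵀ = K * S * Kᵀ - K * Pᵀ - P * Kᵀ + P * S⁻¹ * Pᵀ := by
  have hS' : (S⁻¹)ᵀ = S⁻¹ := by rw [transpose_nonsing_inv, hS]
  have hSS : ∀ M : Matrix κ ι 𝕜, S * (S⁻¹ * M) = M := fun M => by
    rw [← Matrix.mul_assoc, mul_nonsing_inv _ hdet, Matrix.one_mul]
  have hSS' : ∀ M : Matrix κ ι 𝕜, S⁻¹ * (S * M) = M := fun M => by
    rw [← Matrix.mul_assoc, nonsing_inv_mul _ hdet, Matrix.one_mul]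
  simp only [transpose_sub, transpose_mul, hS', Matrix.sub_mul, Matrix.mul_sub,
    Matrix.mul_assoc, hSS, hSS']
  abel

variable [Fintype ι]

noncomputable def riccati (A : Matrix ι ι 𝕜) (C : Matrix κ ι 𝕜) (Q : Matrix ι ι 𝕜)
    (R : Matrix κ κ 𝕜) (X : Matrix ι ι 𝕜) : Matrix ι ι 𝕜 :=
  A * X * Aᵀ + Q - A * X * Cᵀ * (C * X * Cᵀ + R)⁻¹ * C * X * Aᵀ

noncomputable def kalmanGain (A : Matrix ι ι 𝕜) (C : Matrix κ ι 𝕜) (R : Matrix κ κ 𝕜)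
    (X : Matrix ι ι 𝕜) : Matrix ι κ 𝕜 :=
  A * X * Cᵀ * (C * X * Cᵀ + R)⁻¹

theorem riccati_add_completed_square (A : Matrix ι ι 𝕜) (C : Matrix κ ι 𝕜) (Q : Matrix ι ι 𝕜)
    {R : Matrix κ κ 𝕜} {X : Matrix ι ι 𝕜} (K : Matrix ι κ 𝕜) (hX : Xᵀ = X) (hR : Rᵀ = R)
    (hdet : IsUnit (C * X * Cᵀ + R).det) :
    (A - K * C) * X * (A - K * C)ᵀ + K * R * Kᵀ + Q =
      riccati A C Q R X +
        (K - kalmanGain A C R X) * (C * X * Cᵀ + R) * (K - kalmanGain A C R X)ᵀ := by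
  set S := C * X * Cᵀ + R
  have hS : Sᵀ = S := by simp [S, transpose_add, Matrix.mul_assoc, hX, hR]
  have hR' : R = S - C * X * Cᵀ := by simp [S]
  rw [riccati, kalmanGain, sub_mul_inv_mul_mul_transpose _ _ hS hdet, hR']
  simp only [transpose_sub, transpose_mul, transpose_transpose, hX, Matrix.sub_mul,
    Matrix.mul_sub, Matrix.mul_assoc]
  abel_nf

theorem riccati_eq_closed_loop (A : Matrix ι ι 𝕜) (C : Matrix κ ι 𝕜) (Q : Matrix ι ι 𝕜)
    {R : Matrix κ κ 𝕜} {X : Matrix ι ι 𝕜} (hX : Xᵀ = X) (hR : Rᵀ = R)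
    (hdet : IsUnit (C * X * Cᵀ + R).det) :
    riccati A C Q R X =
      (A - kalmanGain A C R X * C) * X * (A - kalmanGain A C R X * C)ᵀ +
        kalmanGain A C R X * R * (kalmanGain A C R X)ᵀ + Q := by
  rw [riccati_add_completed_square A C Q _ hX hR hdet]
  simp

theorem riccati_sub_riccati (A : Matrix ι ι 𝕜) (C : Matrix κ ι 𝕜) (Q : Matrix ι ι 𝕜)
    {R : Matrix κ κ 𝕜} {X Y : Matrix ι ι 𝕜} (hX : Xᵀ = X) (hY : Yᵀ = Y) (hR : Rᵀ = R)
    (hdetX : IsUnit (C * X * Cᵀ + R).det) (hdetY : IsUnit (C * Y * Cᵀ + R).det) :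
    riccati A C Q R X - riccati A C Q R Y =
      (A - kalmanGain A C R X * C) * (X - Y) * (A - kalmanGain A C R X * C)ᵀ +
        (kalmanGain A C R X - kalmanGain A C R Y) * (C * Y * Cᵀ + R) *
          (kalmanGain A C R X - kalmanGain A C R Y)ᵀ := by
  have atY := riccati_add_completed_square A C Q (kalmanGain A C R X) hY hR hdetY
  rw [riccati_eq_closed_loop A C Q hX hR hdetX, eq_sub_of_add_eq atY.symm]
  noncomm_ring

theorem lyapunov_sub_riccati (A : Matrix ι ι 𝕜) (C : Matrix κ ι 𝕜) (Q : Matrix ι ι 𝕜)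
    (R : Matrix κ κ 𝕜) {X : Matrix ι ι 𝕜} (hX : Xᵀ = X) :
    A * X * Aᵀ + Q - riccati A C Q R X =
      A * X * Cᵀ * (C * X * Cᵀ + R)⁻¹ * (A * X * Cᵀ)ᵀ := by
  simp [riccati, transpose_mul, hX, Matrix.mul_assoc]

end CommRing

section Real

variable [Fintype ι] [DecidableEq κ] {C : Matrix κ ι ℝ} {R : Matrix κ κ ℝ} {X Y : Matrix ι ι ℝ}

theorem riccati_sub_riccati_posSemidef (A : Matrix ι ι ℝ) (Q : Matrix ι ι ℝ) (hR : R.PosDef)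
    (hY : Y.PosSemidef) (hXY : (X - Y).PosSemidef) :
    (riccati A C Q R X - riccati A C Q R Y).PosSemidef := by
  have hX : X.PosSemidef := by simpa using hXY.add hY
  have hSX := hX.mul_mul_transpose_add_posDef C hR
  have hSY := hY.mul_mul_transpose_add_posDef C hR
  rw [riccati_sub_riccati A C Q hX.transpose_eq_self hY.transpose_eq_self
    hR.posSemidef.transpose_eq_self hSX.det_pos.ne'.isUnit hSY.det_pos.ne'.isUnit]
  exact (hXY.mul_mul_transpose_same _).add (hSY.posSemidef.mul_mul_transpose_same _)

theorem lyapunov_sub_riccati_posSemidef (A : Matrix ι ι ℝ) (Q : Matrix ι ι ℝ) (hR : R.PosDef)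
    (hX : X.PosSemidef) : (A * X * Aᵀ + Q - riccati A C Q R X).PosSemidef := by
  rw [lyapunov_sub_riccati A C Q R hX.transpose_eq_self]
  exact (hX.mul_mul_transpose_add_posDef C hR).inv.posSemidef.mul_mul_transpose_same _

end Real

end Matrix

theorem h_g_monotone_general {n m : ℕ} (A : Matrix (Fin n) (Fin n) ℝ)
    (C : Matrix (Fin m) (Fin n) ℝ) (Q : Matrix (Fin n) (Fin n) ℝ)
    (R : Matrix (Fin m) (Fin m) ℝ) (hR : R.PosDef)
    (h : Matrix (Fin n) (Fin n) ℝ → Matrix (Fin n) (Fin n) ℝ)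
    (g : Matrix (Fin n) (Fin n) ℝ → Matrix (Fin n) (Fin n) ℝ)
    (hh : ∀ X, h X = A * X * Aᵀ + Q)
    (hg : ∀ X, g X = A * X * Aᵀ + Q - A * X * Cᵀ * (C * X * Cᵀ + R)⁻¹ * C * X * Aᵀ)
    (X Y : Matrix (Fin n) (Fin n) ℝ) (hY : Y.PosSemidef) (hXY : (X - Y).PosSemidef) :
    (h X - h Y).PosSemidef ∧ (g X - g Y).PosSemidef ∧ (h X - g X).PosSemidef := by
  have hg' : g = riccati A C Q R := funext hg
  have hX : X.PosSemidef := by simpa using hXY.add hY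
  refine ⟨?_, ?_, ?_⟩
  · have hdiff : h X - h Y = A * (X - Y) * Aᵀ := by rw [hh, hh]; noncomm_ring
    exact hdiff ▸ hXY.mul_mul_transpose_same A
  · exact hg' ▸ riccati_sub_riccati_posSemidef A Q hR hY hXY
  · exact hh X ▸ hg' ▸ lyapunov_sub_riccati_posSemidef A Q hR hX

/-- Monotonicity of the Riccati-type operators `h(X) = A X Aᵀ + Q` and
`g(X) = A X Aᵀ + Q − A X Cᵀ (C X Cᵀ + R)⁻¹ C X Aᵀ` with respect to the
Loewner order, and `h(X) ≥ g(X)`. -/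
theorem h_g_monotone {n m : ℕ} (A : Matrix (Fin n) (Fin n) ℝ)
    (C : Matrix (Fin m) (Fin n) ℝ) (Q : Matrix (Fin n) (Fin n) ℝ)
    (R : Matrix (Fin m) (Fin m) ℝ) (hQ : Q.PosSemidef) (hR : R.PosDef)
    (h : Matrix (Fin n) (Fin n) ℝ → Matrix (Fin n) (Fin n) ℝ)
    (g : Matrix (Fin n) (Fin n) ℝ → Matrix (Fin n) (Fin n) ℝ)
    (hh : ∀ X, h X = A * X * Aᵀ + Q)
    (hg : ∀ X, g X = A * X * Aᵀ + Q - A * X * Cᵀ * (C * X * Cᵀ + R)⁻¹ * C * X * Aᵀ)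
    (X Y : Matrix (Fin n) (Fin n) ℝ) (hY : Y.PosSemidef) (hXY : (X - Y).PosSemidef) :
    (h X - h Y).PosSemidef ∧ (g X - g Y).PosSemidef ∧ (h X - g X).PosSemidef :=
  h_g_monotone_general A C Q R hR h g hh hg X Y hY hXY
end

section
/- Let g(X) = A X Aᵀ + Q − A X Cᵀ (C X Cᵀ + R)^{-1} C X Aᵀ and φ(K, X) = (A + KC) X (A + KC)ᵀ + Q + K R Kᵀ, with R positive definite and Q positive semidefinite. Then for every positive semidefinite X and every matrix K of compatible dimensions, g(X) ≤ φ(K, X), with equality for K = −A X Cᵀ (C X Cᵀ + R)^{-1}. -/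
/-! Expanding `φ(K, X) − g(X)` and completing the square in `K` gives
`(K + A X Cᵀ S⁻¹) S (K + A X Cᵀ S⁻¹)ᵀ` with `S = C X Cᵀ + R`. Since `S` is positive definite this
is positive semidefinite, and it vanishes at the gain `K = −A X Cᵀ S⁻¹`. -/

open Matrix

namespace Matrix

variable {ι κ α : Type*} [Fintype κ] [DecidableEq κ] [CommRing α]

theorem add_mul_inv_mul_mul_transpose_add_mul_inv (K B : Matrix ι κ α) {S : Matrix κ κ α}
    (hS : IsUnit S.det) (hSt : Sᵀ = S) :
    (K + B * S⁻¹) * S * (K + B * S⁻¹)ᵀ = K * S * Kᵀ + K * Bᵀ + B * Kᵀ + B * S⁻¹ * Bᵀ := by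
  have h_transpose : (K + B * S⁻¹)ᵀ = Kᵀ + S⁻¹ * Bᵀ := by
    rw [transpose_add, transpose_mul, transpose_nonsing_inv, hSt]
  have h_cancel : (K + B * S⁻¹) * S = K * S + B := by
    rw [Matrix.add_mul, Matrix.mul_assoc, nonsing_inv_mul S hS, Matrix.mul_one]
  have h_cancel' : K * S * (S⁻¹ * Bᵀ) = K * Bᵀ := by
    rw [Matrix.mul_assoc, ← Matrix.mul_assoc S, mul_nonsing_inv S hS, Matrix.one_mul]
  rw [h_transpose, h_cancel, Matrix.add_mul, Matrix.mul_add, Matrix.mul_add, h_cancel',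
    Matrix.mul_assoc B S⁻¹]
  abel

variable [Fintype ι]

theorem riccati_sub_eq_mul_mul_transpose (A X Q : Matrix ι ι α) (C : Matrix κ ι α)
    (R : Matrix κ κ α) (K : Matrix ι κ α) (hX : Xᵀ = X) (hR : Rᵀ = R)
    (hS : IsUnit (C * X * Cᵀ + R).det) :
    (A + K * C) * X * (A + K * C)ᵀ + Q + K * R * Kᵀ -
        (A * X * Aᵀ + Q - A * X * Cᵀ * (C * X * Cᵀ + R)⁻¹ * C * X * Aᵀ) =
      (K + A * X * Cᵀ * (C * X * Cᵀ + R)⁻¹) * (C * X * Cᵀ + R) *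
        (K + A * X * Cᵀ * (C * X * Cᵀ + R)⁻¹)ᵀ := by
  have hSt : (C * X * Cᵀ + R)ᵀ = C * X * Cᵀ + R := by
    rw [transpose_add, transpose_mul, transpose_mul, hX, hR, transpose_transpose,
      Matrix.mul_assoc]
  have hBt : (A * X * Cᵀ)ᵀ = C * X * Aᵀ := by
    rw [transpose_mul, transpose_mul, hX, transpose_transpose, Matrix.mul_assoc]
  rw [add_mul_inv_mul_mul_transpose_add_mul_inv K _ hS hSt, hBt]
  simp only [Matrix.add_mul, Matrix.mul_add, transpose_add, transpose_mul, Matrix.mul_assoc]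
  abel

end Matrix

theorem Matrix.PosSemidef.mul_mul_transpose_add_posDef_s7 {ι κ : Type*} [Fintype ι] [Fintype κ]
    {X : Matrix ι ι ℝ} {R : Matrix κ κ ℝ} (hX : X.PosSemidef) (hR : R.PosDef)
    (C : Matrix κ ι ℝ) : (C * X * Cᵀ + R).PosDef := by
  have hCXC : (C * X * Cᵀ).PosSemidef := by
    simpa only [conjTranspose_eq_transpose_of_trivial] using hX.mul_mul_conjTranspose_same C
  exact PosDef.posSemidef_add hCXC hR

theorem g_le_phi_general {n m : ℕ} (A : Matrix (Fin n) (Fin n) ℝ)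
    (C : Matrix (Fin m) (Fin n) ℝ) (Q : Matrix (Fin n) (Fin n) ℝ)
    (R : Matrix (Fin m) (Fin m) ℝ) (hR : R.PosDef)
    (g : Matrix (Fin n) (Fin n) ℝ → Matrix (Fin n) (Fin n) ℝ)
    (hg : ∀ X, g X = A * X * Aᵀ + Q - A * X * Cᵀ * (C * X * Cᵀ + R)⁻¹ * C * X * Aᵀ)
    (φ : Matrix (Fin n) (Fin m) ℝ → Matrix (Fin n) (Fin n) ℝ → Matrix (Fin n) (Fin n) ℝ)
    (hφ : ∀ K X, φ K X = (A + K * C) * X * (A + K * C)ᵀ + Q + K * R * Kᵀ)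
    (X : Matrix (Fin n) (Fin n) ℝ) (hX : X.PosSemidef) :
    (∀ K : Matrix (Fin n) (Fin m) ℝ, (φ K X - g X).PosSemidef) ∧
      g X = φ (-(A * X * Cᵀ * (C * X * Cᵀ + R)⁻¹)) X := by
  have hS := hX.mul_mul_transpose_add_posDef_s7 hR C
  have key : ∀ K, φ K X - g X = (K + A * X * Cᵀ * (C * X * Cᵀ + R)⁻¹) * (C * X * Cᵀ + R) *
      (K + A * X * Cᵀ * (C * X * Cᵀ + R)⁻¹)ᵀ := fun K => by
    rw [hφ, hg]
    exact riccati_sub_eq_mul_mul_transpose A X Q C R K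
      (isHermitian_iff_isSymm.mp hX.isHermitian).eq (isHermitian_iff_isSymm.mp hR.isHermitian).eq
      ((isUnit_iff_isUnit_det _).mp hS.isUnit)
  refine ⟨fun K => ?_, ?_⟩
  · rw [key K]
    simpa only [conjTranspose_eq_transpose_of_trivial] using
      hS.posSemidef.mul_mul_conjTranspose_same (K + A * X * Cᵀ * (C * X * Cᵀ + R)⁻¹)
  · have h_zero := key (-(A * X * Cᵀ * (C * X * Cᵀ + R)⁻¹))
    rw [neg_add_cancel, Matrix.zero_mul, Matrix.zero_mul] at h_zero
    exact (sub_eq_zero.mp h_zero).symm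

/-- `g(X) ≤ φ(K, X)` in the Loewner order for every `K`, with equality at
`K = −A X Cᵀ (C X Cᵀ + R)⁻¹`. -/
theorem g_le_phi {n m : ℕ} (A : Matrix (Fin n) (Fin n) ℝ)
    (C : Matrix (Fin m) (Fin n) ℝ) (Q : Matrix (Fin n) (Fin n) ℝ)
    (R : Matrix (Fin m) (Fin m) ℝ) (hQ : Q.PosSemidef) (hR : R.PosDef)
    (g : Matrix (Fin n) (Fin n) ℝ → Matrix (Fin n) (Fin n) ℝ)
    (hg : ∀ X, g X = A * X * Aᵀ + Q - A * X * Cᵀ * (C * X * Cᵀ + R)⁻¹ * C * X * Aᵀ)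
    (φ : Matrix (Fin n) (Fin m) ℝ → Matrix (Fin n) (Fin n) ℝ → Matrix (Fin n) (Fin n) ℝ)
    (hφ : ∀ K X, φ K X = (A + K * C) * X * (A + K * C)ᵀ + Q + K * R * Kᵀ)
    (X : Matrix (Fin n) (Fin n) ℝ) (hX : X.PosSemidef) :
    (∀ K : Matrix (Fin n) (Fin m) ℝ, (φ K X - g X).PosSemidef) ∧
      g X = φ (-(A * X * Cᵀ * (C * X * Cᵀ + R)⁻¹)) X :=
  g_le_phi_general A C Q R hR g hg φ hφ X hX
end

section
/- Let 𝓛 be a linear, Loewner-order non-decreasing operator on positive semidefinite n×n Hermitian matrices. If there exists a positive definite P with 𝓛(P) < P (strict Loewner order), then for every positive semidefinite X, 𝓛^k(X) → 0 as k → ∞. -/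
open scoped ComplexOrder

/-!
Since `P - 𝓛 P` is strictly positive, it dominates `δ • P` for some `δ ∈ (0, 1]`, so
`𝓛 P ≤ ρ • P` with `ρ = 1 - δ < 1`; likewise `X ≤ c • P` for some `c > 0`. Positivity and
linearity of `𝓛` give `0 ≤ 𝓛^k X ≤ c ρ^k • P`, and in the C⋆-algebra of matrices with the
operator norm `0 ≤ a ≤ b` implies `‖a‖ ≤ ‖b‖`, so `‖𝓛^k X‖ ≤ c ρ^k ‖P‖ → 0`.
-/

open Filter Topology Set

lemma IsStrictlyPositive.eventually_smul_le {A : Type*} [CStarAlgebra A] [PartialOrder A]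
    [StarOrderedRing A] {p q : A} (hq : IsStrictlyPositive q)
    (hp : IsSelfAdjoint p) : ∀ᶠ δ in 𝓝[>] (0 : ℝ), δ • p ≤ q := by
  nontriviality A
  obtain ⟨ε, hε, hεq⟩ : ∃ ε > 0, algebraMap ℝ A ε ≤ q :=
    (CFC.exists_pos_algebraMap_le_iff hq.isSelfAdjoint).2 fun _ hx ↦ hq.spectrum_pos hx
  filter_upwards [Ioo_mem_nhdsGT (div_pos hε (by positivity : 0 < ‖p‖ + 1))]
    with δ ⟨hδ, hδε⟩
  have hδp : δ * ‖p‖ ≤ ε := by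
    rw [lt_div_iff₀ (by positivity)] at hδε
    nlinarith [norm_nonneg p]
  calc δ • p ≤ δ • algebraMap ℝ A ‖p‖ :=
        smul_le_smul_of_nonneg_left hp.le_algebraMap_norm_self hδ.le
    _ = algebraMap ℝ A (δ * ‖p‖) := by rw [map_mul, Algebra.smul_def]
    _ ≤ algebraMap ℝ A ε := algebraMap_mono A hδp
    _ ≤ q := hεq

lemma LinearMap.iterate_le_smul_of_le_smul {𝕜 E : Type*} [Semiring 𝕜] [PartialOrder 𝕜]
    [IsOrderedRing 𝕜] [AddCommMonoid E] [Preorder E] [Module 𝕜 E] [PosSMulMono 𝕜 E]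
    {L : E →ₗ[𝕜] E} (hL : Monotone L) {p x : E} {ρ c : 𝕜} (hρ : 0 ≤ ρ) (hLp : L p ≤ ρ • p)
    (hc : 0 ≤ c) (hx : x ≤ c • p) (k : ℕ) :
    L^[k] x ≤ (c * ρ ^ k) • p := by
  induction k with
  | zero => simpa using hx
  | succ k ih =>
    have hck : 0 ≤ c * ρ ^ k := mul_nonneg hc (pow_nonneg hρ k)
    calc L^[k + 1] x = L (L^[k] x) := Function.iterate_succ_apply' _ _ _
      _ ≤ L ((c * ρ ^ k) • p) := hL ih
      _ = (c * ρ ^ k) • L p := map_smul _ _ _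
      _ ≤ (c * ρ ^ k) • ρ • p := smul_le_smul_of_nonneg_left hLp hck
      _ = (c * ρ ^ (k + 1)) • p := by rw [smul_smul, mul_assoc, pow_succ]

lemma tendsto_zero_of_nonneg_of_le_smul {ι A : Type*} [NonUnitalCStarAlgebra A]
    [PartialOrder A] [StarOrderedRing A] {l : Filter ι} {y : ι → A} {a : ι → ℝ} {p : A}
    (hy₀ : ∀ i, 0 ≤ y i) (hy : ∀ i, y i ≤ a i • p) (ha : Tendsto a l (𝓝 0)) :
    Tendsto y l (𝓝 0) := by
  refine squeeze_zero_norm (fun i ↦ CStarAlgebra.norm_le_norm_of_nonneg_of_le (hy₀ i) (hy i)) ?_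
  simpa using (ha.smul_const p).norm

theorem tendsto_iterate_zero_of_isStrictlyPositive_sub {A : Type*} [CStarAlgebra A]
    [PartialOrder A] [StarOrderedRing A] {L : A →ₗ[ℝ] A} (hL : Monotone L) {p : A}
    (hp : IsStrictlyPositive p) (hLp : IsStrictlyPositive (p - L p)) {x : A} (hx : 0 ≤ x) :
    Tendsto (fun k ↦ L^[k] x) atTop (𝓝 0) := by
  obtain ⟨δ, hδp, hδ, hδ₁⟩ :=
    ((hLp.eventually_smul_le hp.isSelfAdjoint).and (Ioc_mem_nhdsGT one_pos)).exists
  obtain ⟨c, hcx, hc⟩ :=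
    ((hp.eventually_smul_le hx.isSelfAdjoint).and self_mem_nhdsWithin).exists
  have hρ : 0 ≤ 1 - δ := sub_nonneg.2 hδ₁
  have hLp' : L p ≤ (1 - δ) • p := by
    rw [sub_smul, one_smul]
    exact le_sub_comm.mp hδp
  have hxp : x ≤ c⁻¹ • p := (le_inv_smul_iff_of_pos hc).2 hcx
  refine tendsto_zero_of_nonneg_of_le_smul (fun k ↦ ?_)
    (L.iterate_le_smul_of_le_smul hL hρ hLp' (inv_nonneg.2 hc.le) hxp) ?_
  · simpa using hL.iterate k hx
  · simpa using (tendsto_pow_atTop_nhds_zero_of_lt_one hρ (by linarith)).const_mul c⁻¹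

theorem iterate_tendsto_zero_general {n : ℕ}
    (L : Matrix (Fin n) (Fin n) ℂ →ₗ[ℝ] Matrix (Fin n) (Fin n) ℂ)
    (hpsd : ∀ X : Matrix (Fin n) (Fin n) ℂ, X.PosSemidef → (L X).PosSemidef)
    (P : Matrix (Fin n) (Fin n) ℂ) (hP : P.PosDef) (hLP : (P - L P).PosDef) :
    ∀ X : Matrix (Fin n) (Fin n) ℂ, X.PosSemidef →
      Filter.Tendsto (fun k => (⇑L)^[k] X) Filter.atTop (nhds 0) := by
  intro X hX
  -- The operator-norm metric is built to induce the entrywise topology, so the goal is unchanged.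
  open scoped MatrixOrder Matrix.Norms.L2Operator in
  exact tendsto_iterate_zero_of_isStrictlyPositive_sub
    ((monotone_iff_map_nonneg L).2 fun Y hY ↦
      (hpsd Y (Matrix.nonneg_iff_posSemidef.1 hY)).nonneg)
    hP.isStrictlyPositive hLP.isStrictlyPositive hX.nonneg

/-- If a linear, Loewner-monotone operator `𝓛` preserving the positive
semidefinite cone contracts some positive definite matrix strictly
(`𝓛(P) < P`), then `𝓛^k(X) → 0` for every positive semidefinite `X`. -/
theorem iterate_tendsto_zero {n : ℕ}
    (L : Matrix (Fin n) (Fin n) ℂ →ₗ[ℝ] Matrix (Fin n) (Fin n) ℂ)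
    (hpsd : ∀ X : Matrix (Fin n) (Fin n) ℂ, X.PosSemidef → (L X).PosSemidef)
    (hmono : ∀ X Y : Matrix (Fin n) (Fin n) ℂ, (Y - X).PosSemidef →
      (L Y - L X).PosSemidef)
    (P : Matrix (Fin n) (Fin n) ℂ) (hP : P.PosDef) (hLP : (P - L P).PosDef) :
    ∀ X : Matrix (Fin n) (Fin n) ℂ, X.PosSemidef →
      Filter.Tendsto (fun k => (⇑L)^[k] X) Filter.atTop (nhds 0) :=
  iterate_tendsto_zero_general L hpsd P hP hLP
end
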